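/- Let 𝒜 be a synchronizing automaton and let 𝒞 ⊆ [1,k] be a minimal core. Then there exist words u_1,…,u_m whose supports supp(u_1),…,supp(u_m) are minimal sections (each supp(u_j) being a u_j-realized minimal element of some 𝒮(v_j)) such that 𝒞 ⊆ supp(u_1) ∪ supp(u_2) ∪ ⋯ ∪ supp(u_m). -/
import Mathlib


open scoped BigOperators

set_option synthInstance.maxHeartbeats 1000000
set_option maxHeartbeats 1000000

noncomputable section

/-- Action of a word on a state: `q · u`. -/
def actW {Q A : Type*} (δ : Q → A → Q) (q : Q) (u : List A) : Q :=
  u.foldl δ q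

/-- The image `Q · u` of the full state set under a word. -/
def imageSet {Q A : Type*} [Fintype Q] [DecidableEq Q] (δ : Q → A → Q) (u : List A) :
    Finset Q :=
  Finset.image (fun q => actW δ q u) Finset.univ

/-- The rank `rk(u) = |Q · u|` of a word. -/
def wordRank {Q A : Type*} [Fintype Q] [DecidableEq Q] (δ : Q → A → Q) (u : List A) : ℕ :=
  (imageSet δ u).card

/-- A word is reset (synchronizing) if `|Q · u| = 1`. -/
def IsReset {Q A : Type*} [Fintype Q] [DecidableEq Q] (δ : Q → A → Q) (u : List A) : Prop :=
  wordRank δ u = 1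

/-- The automaton is synchronizing if it admits a reset word. -/
def IsSynchronizing {Q A : Type*} [Fintype Q] [DecidableEq Q] (δ : Q → A → Q) : Prop :=
  ∃ u : List A, IsReset δ u

/-- `Syn(𝒜)`, the set of reset words. -/
def SynWords {Q A : Type*} [Fintype Q] [DecidableEq Q] (δ : Q → A → Q) : Set (List A) :=
  {u | IsReset δ u}

/-- The hyperplane `w⊥ = {v ∈ ℂQ : ∑ q, v q = 0}`. -/
def Wperp (Q : Type*) [Fintype Q] : Submodule ℂ (Q → ℂ) :=
  LinearMap.ker (∑ q : Q, (LinearMap.proj q : (Q → ℂ) →ₗ[ℂ] ℂ))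

theorem mem_Wperp {Q : Type*} [Fintype Q] (v : Q → ℂ) :
    v ∈ Wperp Q ↔ ∑ q : Q, v q = 0 := by
  simp [Wperp, LinearMap.mem_ker, LinearMap.sum_apply]

/-- The (right) action of a word on row vectors `v ↦ v·π(u)`. -/
def piLin {Q A : Type*} [Fintype Q] [DecidableEq Q] (δ : Q → A → Q) (u : List A) :
    (Q → ℂ) →ₗ[ℂ] (Q → ℂ) where
  toFun v := fun p => ∑ q ∈ Finset.univ.filter (fun q => actW δ q u = p), v q
  map_add' := by
    intro a b; funext p; simp [Finset.sum_add_distrib]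
  map_smul' := by
    intro c v; funext p; simp [Finset.mul_sum]

theorem piLin_mem {Q A : Type*} [Fintype Q] [DecidableEq Q] (δ : Q → A → Q) (u : List A) :
    ∀ v ∈ Wperp Q, piLin δ u v ∈ Wperp Q := by
  intro v hv
  rw [mem_Wperp] at hv ⊢
  have h := Finset.sum_fiberwise (Finset.univ : Finset Q) (fun q => actW δ q u) v
  calc ∑ p : Q, piLin δ u v p
      = ∑ p : Q, ∑ q ∈ Finset.univ.filter (fun q => actW δ q u = p), v q := rfl
    _ = ∑ q : Q, v q := h
    _ = 0 := hv

/-- The endomorphism of `w⊥` induced by a word. -/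
def rhoEnd {Q A : Type*} [Fintype Q] [DecidableEq Q] (δ : Q → A → Q) (u : List A) :
    Module.End ℂ (Wperp Q) :=
  (piLin δ u).restrict (piLin_mem δ u)

/-- The representation `ρ : Σ* → End(w⊥)`; we record it in the multiplicative opposite so
that `ρ (u ++ v) = ρ u * ρ v` (the paper's right-action convention). -/
def rho {Q A : Type*} [Fintype Q] [DecidableEq Q] (δ : Q → A → Q) (u : List A) :
    (Module.End ℂ (Wperp Q))ᵐᵒᵖ :=
  MulOpposite.op (rhoEnd δ u)

/-- `ℛ`, the ℂ-subalgebra generated by `ρ(Σ*)`. -/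
def Ralg {Q A : Type*} [Fintype Q] [DecidableEq Q] (δ : Q → A → Q) :
    Subalgebra ℂ (Module.End ℂ (Wperp Q))ᵐᵒᵖ :=
  Algebra.adjoin ℂ (Set.range (rho δ))

/-- `ρ(u)` seen as an element of `ℛ`. -/
def rhoR {Q A : Type*} [Fintype Q] [DecidableEq Q] (δ : Q → A → Q) (u : List A) :
    Ralg δ :=
  ⟨rho δ u, Algebra.subset_adjoin (Set.mem_range_self u)⟩

/-- The Jacobson radical `Rad(ℛ)` of `ℛ`, realised as a subset of the ambient algebra via
the standard characterisation: `x ∈ Rad(ℛ)` iff `x ∈ ℛ` and for every `y ∈ ℛ` the element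
`1 - y * x` is left-invertible in `ℛ`. -/
def RadSet {Q A : Type*} [Fintype Q] [DecidableEq Q] (δ : Q → A → Q) :
    Set (Module.End ℂ (Wperp Q))ᵐᵒᵖ :=
  {x | x ∈ Ralg δ ∧ ∀ y ∈ Ralg δ, ∃ z ∈ Ralg δ, z * (1 - y * x) = 1}

/-- `Rad(𝒜)`: the set of radical words, i.e. words `u` with `ρ(u) ∈ Rad(ℛ)`. -/
def RadWords {Q A : Type*} [Fintype Q] [DecidableEq Q] (δ : Q → A → Q) : Set (List A) :=
  {u | rho δ u ∈ RadSet δ}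

/-- The automaton is semisimple when `Rad(𝒜) = Syn(𝒜)`. -/
def IsSemisimple {Q A : Type*} [Fintype Q] [DecidableEq Q] (δ : Q → A → Q) : Prop :=
  RadWords δ = SynWords δ

/-- The `t`-packing number `D(t,r,n)`: the maximum size of a family of `r`-subsets of an
`n`-set in which every `t`-subset is contained in at most one member. -/
def packingNumber (t r n : ℕ) : ℕ :=
  sSup {m | ∃ F : Finset (Finset (Fin n)), F.card = m ∧ (∀ S ∈ F, S.card = r) ∧
    ∀ T : Finset (Fin n), T.card = t → (F.filter fun S => T ⊆ S).card ≤ 1}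

/-- The former-rank `Fr(𝒜)`: the least rank of a non-reset word. -/
def formerRank {Q A : Type*} [Fintype Q] [DecidableEq Q] (δ : Q → A → Q) : ℕ :=
  sInf {m | ∃ u : List A, ¬ IsReset δ u ∧ wordRank δ u = m}

/-- `Fs(𝒜)`: the set of former-synchronizing words. -/
def Fs {Q A : Type*} [Fintype Q] [DecidableEq Q] (δ : Q → A → Q) : Set (List A) :=
  {u | wordRank δ u = formerRank δ}

/-- `θ_i(u)`: the image of `ρ(u)` in the `i`-th Wedderburn–Artin matrix component, where
`e : ℛ → ∏ i, M_{n_i}(ℂ)` is the quotient map `ψ` followed by the fixed isomorphism. -/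
def theta {Q A : Type*} [Fintype Q] [DecidableEq Q] (δ : Q → A → Q) {k : ℕ} {nn : Fin k → ℕ}
    (e : Ralg δ →ₐ[ℂ] ∀ i : Fin k, Matrix (Fin (nn i)) (Fin (nn i)) ℂ)
    (u : List A) (i : Fin k) : Matrix (Fin (nn i)) (Fin (nn i)) ℂ :=
  e (rhoR δ u) i

/-- `supp(v) = {i : θ_i(v) ≠ 0}`. -/
def suppW {Q A : Type*} [Fintype Q] [DecidableEq Q] (δ : Q → A → Q) {k : ℕ} {nn : Fin k → ℕ}
    (e : Ralg δ →ₐ[ℂ] ∀ i : Fin k, Matrix (Fin (nn i)) (Fin (nn i)) ℂ)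
    (v : List A) : Set (Fin k) :=
  {i | theta δ e v i ≠ 0}

/-- `u ∈ Σ* v Σ*`, i.e. `v` is a factor of `u`. -/
def InFactor {A : Type*} (v u : List A) : Prop :=
  ∃ a b : List A, u = a ++ v ++ b

/-- `u` is a `v`-minimal word: `u ∈ Σ*vΣ*`, `supp(u)` is nonempty, and `supp(u)` is minimal
among the nonempty supports of words in `Σ*vΣ*`. -/
def IsVMinimal {Q A : Type*} [Fintype Q] [DecidableEq Q] (δ : Q → A → Q) {k : ℕ}
    {nn : Fin k → ℕ}
    (e : Ralg δ →ₐ[ℂ] ∀ i : Fin k, Matrix (Fin (nn i)) (Fin (nn i)) ℂ)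
    (v u : List A) : Prop :=
  InFactor v u ∧ (suppW δ e u).Nonempty ∧
    ∀ z : List A, InFactor v z → suppW δ e z ⊆ suppW δ e u →
      suppW δ e z = ∅ ∨ suppW δ e z = suppW δ e u

/-- The `i`-th factor monoid `ℳ_i = θ_i(Σ*)`. -/
def factorMonoid {Q A : Type*} [Fintype Q] [DecidableEq Q] (δ : Q → A → Q) {k : ℕ}
    {nn : Fin k → ℕ}
    (e : Ralg δ →ₐ[ℂ] ∀ i : Fin k, Matrix (Fin (nn i)) (Fin (nn i)) ℂ)
    (i : Fin k) : Set (Matrix (Fin (nn i)) (Fin (nn i)) ℂ) :=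
  Set.range fun u : List A => theta δ e u i

/-- A two-sided ideal of the (sub)monoid `M`. -/
def IsSetIdeal {X : Type*} [Mul X] (M I : Set X) : Prop :=
  I ⊆ M ∧ ∀ a ∈ M, ∀ x ∈ I, a * x ∈ I ∧ x * a ∈ I

/-- `I` is a `0`-minimal (two-sided) ideal of the monoid `M`. -/
def IsZeroMinimalIdeal {X : Type*} [Mul X] [Zero X] (M I : Set X) : Prop :=
  IsSetIdeal M I ∧ (0 : X) ∈ I ∧ I ≠ {0} ∧
    ∀ J : Set X, IsSetIdeal M J → (0 : X) ∈ J → J ⊆ I → J ≠ {0} → J = I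

/-- `Rnk_i(g) = min {rk(u) : θ_i(u) = g}`. -/
def rnkElt {Q A : Type*} [Fintype Q] [DecidableEq Q] (δ : Q → A → Q) {k : ℕ}
    {nn : Fin k → ℕ}
    (e : Ralg δ →ₐ[ℂ] ∀ i : Fin k, Matrix (Fin (nn i)) (Fin (nn i)) ℂ)
    (i : Fin k) (g : Matrix (Fin (nn i)) (Fin (nn i)) ℂ) : ℕ :=
  sInf {m | ∃ u : List A, theta δ e u i = g ∧ wordRank δ u = m}

/-- `Rnk(ℐ_i) = min {Rnk_i(g) : g ∈ ℐ_i ∖ {0}}`. -/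
def rnkIdeal {Q A : Type*} [Fintype Q] [DecidableEq Q] (δ : Q → A → Q) {k : ℕ}
    {nn : Fin k → ℕ}
    (e : Ralg δ →ₐ[ℂ] ∀ i : Fin k, Matrix (Fin (nn i)) (Fin (nn i)) ℂ)
    (i : Fin k) (I : Set (Matrix (Fin (nn i)) (Fin (nn i)) ℂ)) : ℕ :=
  sInf {m | ∃ g ∈ I, g ≠ 0 ∧ rnkElt δ e i g = m}

/-- `w` `u`-represents `g`: `w ∈ Σ*uΣ*`, `θ_i(w) = g`, and either `g = 0` or `rk(w)` is
minimum among all words with the first two properties. -/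
def URepresents {Q A : Type*} [Fintype Q] [DecidableEq Q] (δ : Q → A → Q) {k : ℕ}
    {nn : Fin k → ℕ}
    (e : Ralg δ →ₐ[ℂ] ∀ i : Fin k, Matrix (Fin (nn i)) (Fin (nn i)) ℂ)
    (u : List A) (i : Fin k) (w : List A) (g : Matrix (Fin (nn i)) (Fin (nn i)) ℂ) : Prop :=
  InFactor u w ∧ theta δ e w i = g ∧
    (g = 0 ∨ ∀ w' : List A, InFactor u w' → theta δ e w' i = g → wordRank δ w ≤ wordRank δ w')

/-- The relation `σ_i` on `ℐ_i`. -/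
def sigmaRel {Q A : Type*} [Fintype Q] [DecidableEq Q] (δ : Q → A → Q) {k : ℕ}
    {nn : Fin k → ℕ}
    (e : Ralg δ →ₐ[ℂ] ∀ i : Fin k, Matrix (Fin (nn i)) (Fin (nn i)) ℂ)
    (i : Fin k) (u : List A)
    (g f : Matrix (Fin (nn i)) (Fin (nn i)) ℂ) : Prop :=
  g = f ∨ ∃ w₁ w₂ : List A, URepresents δ e u i w₁ g ∧ URepresents δ e u i w₂ f ∧
    1 < (imageSet δ w₁ ∩ imageSet δ w₂).card

/-- `T ⊆ [1,k]` is a core. -/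
def IsCore {Q A : Type*} [Fintype Q] [DecidableEq Q] (δ : Q → A → Q) {k : ℕ}
    {nn : Fin k → ℕ}
    (e : Ralg δ →ₐ[ℂ] ∀ i : Fin k, Matrix (Fin (nn i)) (Fin (nn i)) ℂ)
    (T : Set (Fin k)) : Prop :=
  ∀ x : List A, (∀ i ∈ T, theta δ e x i = 0) → ∀ i : Fin k, theta δ e x i = 0

/-- A minimal core. -/
def IsMinimalCore {Q A : Type*} [Fintype Q] [DecidableEq Q] (δ : Q → A → Q) {k : ℕ}
    {nn : Fin k → ℕ}
    (e : Ralg δ →ₐ[ℂ] ∀ i : Fin k, Matrix (Fin (nn i)) (Fin (nn i)) ℂ)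
    (T : Set (Fin k)) : Prop :=
  IsCore δ e T ∧ ∀ T' : Set (Fin k), T' ⊆ T → IsCore δ e T' → T' = T

/-- An automaton congruence. -/
def IsCongruence {Q A : Type*} (δ : Q → A → Q) (σ : Q → Q → Prop) : Prop :=
  Equivalence σ ∧ ∀ q p : Q, σ q p → ∀ u : List A, σ (actW δ q u) (actW δ p u)

/-- A simple automaton: the only congruences are the identity and the universal relation. -/
def IsSimple {Q A : Type*} (δ : Q → A → Q) : Prop :=
  ∀ σ : Q → Q → Prop, IsCongruence δ σ → σ = Eq ∨ σ = fun _ _ => True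



lemma actW_append {Q A : Type*} (δ : Q → A → Q) (q : Q) (a b : List A) :
    actW δ q (a ++ b) = actW δ (actW δ q a) b := by
  simp [actW, List.foldl_append]

lemma piLin_append {Q A : Type*} [Fintype Q] [DecidableEq Q] (δ : Q → A → Q)
    (a b : List A) (v : Q → ℂ) :
    piLin δ (a ++ b) v = piLin δ b (piLin δ a v) := by
  funext p
  show (∑ q ∈ Finset.univ.filter fun q => actW δ q (a ++ b) = p, v q)
     = ∑ r ∈ Finset.univ.filter fun r => actW δ r b = p,
         ∑ q ∈ Finset.univ.filter fun q => actW δ q a = r, v q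
  simp only [Finset.sum_filter, actW_append]
  have hpush : ∀ (c : Prop) [Decidable c] (f : Q → ℂ),
      (if c then ∑ q : Q, f q else 0) = ∑ q : Q, if c then f q else 0 := by
    intro c _ f; split_ifs <;> simp
  simp only [hpush]
  rw [Finset.sum_comm]
  refine Finset.sum_congr rfl fun q _ => ?_
  rw [Finset.sum_eq_single (actW δ q a)]
  · simp
  · intro r _ hr
    simp [Ne.symm hr]
  · simp

lemma rho_append {Q A : Type*} [Fintype Q] [DecidableEq Q] (δ : Q → A → Q)
    (a b : List A) : rho δ (a ++ b) = rho δ a * rho δ b := by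
  unfold rho
  rw [← MulOpposite.op_mul]
  congr 1
  apply LinearMap.ext; intro x; apply Subtype.ext
  show ((piLin δ (a ++ b)).restrict (piLin_mem δ (a ++ b)) x : Q → ℂ)
      = ((rhoEnd δ b * rhoEnd δ a) x : Q → ℂ)
  simp [rhoEnd, Module.End.mul_apply, LinearMap.restrict_coe_apply, piLin_append]

lemma rhoR_append {Q A : Type*} [Fintype Q] [DecidableEq Q] (δ : Q → A → Q)
    (a b : List A) : rhoR δ (a ++ b) = rhoR δ a * rhoR δ b := by
  apply Subtype.ext
  simpa [rhoR] using rho_append δ a b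

lemma theta_append {Q A : Type*} [Fintype Q] [DecidableEq Q] (δ : Q → A → Q) {k : ℕ}
    {nn : Fin k → ℕ}
    (e : Ralg δ →ₐ[ℂ] ∀ i : Fin k, Matrix (Fin (nn i)) (Fin (nn i)) ℂ)
    (a b : List A) (i : Fin k) :
    theta δ e (a ++ b) i = theta δ e a i * theta δ e b i := by
  unfold theta
  rw [rhoR_append, map_mul]
  rfl

lemma suppW_factor_subset {Q A : Type*} [Fintype Q] [DecidableEq Q] (δ : Q → A → Q) {k : ℕ}
    {nn : Fin k → ℕ}
    (e : Ralg δ →ₐ[ℂ] ∀ i : Fin k, Matrix (Fin (nn i)) (Fin (nn i)) ℂ)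
    {x z : List A} (h : InFactor x z) :
    suppW δ e z ⊆ suppW δ e x := by
  obtain ⟨a, b, rfl⟩ := h
  intro i hi
  by_contra h0
  have hx : theta δ e x i = 0 := not_not.mp h0
  apply hi
  rw [theta_append, theta_append, hx, mul_zero, zero_mul]

theorem stmt9 {Q A : Type*} [Fintype Q] [DecidableEq Q] (δ : Q → A → Q)
    {k : ℕ} {nn : Fin k → ℕ}
    (e : Ralg δ →ₐ[ℂ] ∀ i : Fin k, Matrix (Fin (nn i)) (Fin (nn i)) ℂ)
    (he_surj : Function.Surjective e)
    (he_ker : ∀ x : Ralg δ, e x = 0 ↔ (x : (Module.End ℂ (Wperp Q))ᵐᵒᵖ) ∈ RadSet δ)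
    (hsync : IsSynchronizing δ)
    (C : Set (Fin k)) (hC : IsMinimalCore δ e C) :
    ∃ (m : ℕ) (u v : Fin m → List A),
      (∀ j, IsVMinimal δ e (v j) (u j)) ∧
      C ⊆ ⋃ j, suppW δ e (u j) := by
  classical
  by_cases hCe : C = ∅
  · exact ⟨0, Fin.elim0, Fin.elim0, fun j => j.elim0, by simp [hCe]⟩
  · have hkey : ∀ i ∈ C, ∃ u v : List A, IsVMinimal δ e v u ∧ i ∈ suppW δ e u := by
      intro i hi
      have hnc : ¬ IsCore δ e (C \ {i}) := by
        intro hcore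
        have heq := hC.2 (C \ {i}) Set.diff_subset hcore
        have : i ∈ C \ {i} := by rw [heq]; exact hi
        simp at this
      rw [IsCore] at hnc; push_neg at hnc
      obtain ⟨x, hx0, i', hi'⟩ := hnc
      have hxi : theta δ e x i ≠ 0 := by
        intro h
        apply hi'
        apply hC.1 x
        intro j hj
        by_cases hji : j = i
        · subst hji; exact h
        · exact hx0 j ⟨hj, hji⟩
      have hPx : InFactor x x ∧ (suppW δ e x).Nonempty :=
        ⟨⟨[], [], by simp⟩, ⟨i, hxi⟩⟩
      set N : Set ℕ := {n | ∃ z, (InFactor x z ∧ (suppW δ e z).Nonempty) ∧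
        (suppW δ e z).ncard = n} with hN
      have hNne : N.Nonempty := ⟨_, x, hPx, rfl⟩
      obtain ⟨z, hPz, hzcard⟩ := Nat.sInf_mem hNne
      have hmin : ∀ z', InFactor x z' → (suppW δ e z').Nonempty →
          (suppW δ e z).ncard ≤ (suppW δ e z').ncard := by
        intro z' h1 h2
        rw [hzcard]; exact Nat.sInf_le ⟨z', ⟨h1, h2⟩, rfl⟩
      refine ⟨z, x, ⟨hPz.1, hPz.2, ?_⟩, ?_⟩
      · intro z' hz' hsub
        by_cases hempty : suppW δ e z' = ∅
        · exact Or.inl hempty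
        · exact Or.inr (Set.eq_of_subset_of_ncard_le hsub
            (hmin z' hz' (Set.nonempty_iff_ne_empty.2 hempty)) (Set.toFinite _))
      · by_contra hiz
        have hzi : theta δ e z i = 0 := by
          by_contra h; exact hiz h
        have hall : ∀ j ∈ C, theta δ e z j = 0 := by
          intro j hj
          by_cases hji : j = i
          · subst hji; exact hzi
          · have hxj : theta δ e x j = 0 := hx0 j ⟨hj, hji⟩
            by_contra h
            exact (suppW_factor_subset δ e hPz.1 h) hxj
        have hzz := hC.1 z hall
        obtain ⟨j, hj⟩ := hPz.2
        exact hj (hzz j)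
    obtain ⟨i0, hi0⟩ := Set.nonempty_iff_ne_empty.2 hCe
    choose! U V hA hB using hkey
    refine ⟨k, fun j => if j ∈ C then U j else U i0,
      fun j => if j ∈ C then V j else V i0, ?_, ?_⟩
    · intro j
      by_cases h : j ∈ C
      · simpa [h] using hA j h
      · simpa [h] using hA i0 hi0
    · intro i hi
      refine Set.mem_iUnion.2 ⟨i, ?_⟩
      simpa [hi] using hB i hi


end
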